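/- arXiv:1209.2798 — 2 statements merged into one kernel-verified Lean document; each statement's English description precedes it below -/
import Mathlib

section
/- Let G be a group, (π, V) a finite-dimensional complex representation, χ : G → ℂˣ a character, and B : V × V → ℂ a non-degenerate bilinear form with B(π(g)v, π(g)w) = χ(g)⁻¹B(v,w) for all g,v,w. Suppose s ∈ G satisfies: s² acts on V by a scalar ω ∈ ℂˣ, and there exists v₀ ∈ V with B(π(s)v₀, v₀) ≠ 0. If B(v,w) = ε·B(w,v) for a fixed ε ∈ {±1} and all v,w, then ε = ω · χ(s). -/
theorem LinearMap.eq_mul_of_map_map_eq_smul {R V : Type*} [CommSemiring R] [IsDomain R]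
    [AddCommMonoid V] [Module R V] (B : V →ₗ[R] V →ₗ[R] R) (T : V →ₗ[R] V) (c ω ε : R)
    (hT : ∀ v w, B (T v) (T w) = c * B v w) (hT2 : ∀ v, T (T v) = ω • v)
    (hsym : ∀ v w, B v w = ε * B w v) {v₀ : V} (hv₀ : B (T v₀) v₀ ≠ 0) :
    ω = c * ε := by
  refine mul_right_cancel₀ hv₀ ?_
  calc ω * B (T v₀) v₀ = B (T v₀) (T (T v₀)) := by rw [hT2, map_smul, smul_eq_mul]
    _ = c * B v₀ (T v₀) := hT _ _
    _ = c * ε * B (T v₀) v₀ := by rw [hsym v₀, mul_assoc]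

theorem stmt12_general (G : Type*) [Group G] (V : Type*) [AddCommGroup V] [Module ℂ V]
    (π : Representation ℂ G V) (χ : G →* ℂˣ)
    (B : V →ₗ[ℂ] V →ₗ[ℂ] ℂ)
    (hinv : ∀ (g : G) (v w : V), B (π g v) (π g w) = (((χ g)⁻¹ : ℂˣ) : ℂ) * B v w)
    (s : G) (ω : ℂˣ) (hs : ∀ v : V, π (s * s) v = (ω : ℂ) • v)
    (v₀ : V) (hv₀ : B (π s v₀) v₀ ≠ 0)
    (ε : ℂ)
    (hsym : ∀ v w : V, B v w = ε * B w v) :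
    ε = (ω : ℂ) * ((χ s : ℂˣ) : ℂ) := by
  have hs' : ∀ v, π s (π s v) = (ω : ℂ) • v := fun v => by rw [← hs, map_mul, Module.End.mul_apply]
  have hω := LinearMap.eq_mul_of_map_map_eq_smul B (π s) _ _ ε (hinv s) hs' hsym hv₀
  rw [Units.eq_inv_mul_iff_mul_eq] at hω
  rw [← hω, mul_comm]

/-- Twisted sign formula: if `B(gv,gw) = χ(g)⁻¹B(v,w)`, `π(s²) = ω·id`,
`B(π(s)v₀, v₀) ≠ 0` and `B(v,w) = ε·B(w,v)` with `ε = ±1`, then `ε = ω·χ(s)`. -/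
theorem stmt12 (G : Type*) [Group G] (V : Type*) [AddCommGroup V] [Module ℂ V]
    [FiniteDimensional ℂ V]
    (π : Representation ℂ G V) (χ : G →* ℂˣ)
    (B : V →ₗ[ℂ] V →ₗ[ℂ] ℂ)
    (hnd : ∀ v : V, (∀ w : V, B v w = 0) → v = 0)
    (hinv : ∀ (g : G) (v w : V), B (π g v) (π g w) = (((χ g)⁻¹ : ℂˣ) : ℂ) * B v w)
    (s : G) (ω : ℂˣ) (hs : ∀ v : V, π (s * s) v = (ω : ℂ) • v)
    (v₀ : V) (hv₀ : B (π s v₀) v₀ ≠ 0)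
    (ε : ℂ) (hε : ε = 1 ∨ ε = -1)
    (hsym : ∀ v w : V, B v w = ε * B w v) :
    ε = (ω : ℂ) * ((χ s : ℂˣ) : ℂ) :=
  stmt12_general G V π χ B hinv s ω hs v₀ hv₀ ε hsym
end

section
/- Let G be a group, (π, W) an irreducible finite-dimensional complex self-dual representation with non-degenerate G-invariant bilinear form B satisfying B(v,w) = ε(π)·B(w,v). Suppose s ∈ G with s² in the center of G acting on W by the scalar ω(s²), and suppose there exists v₀ ∈ W with B(π(s)v₀, v₀) ≠ 0. Then ε(π) = ω(s²). -/
theorem LinearMap.sign_eq_of_sq_apply_eq_smul {R M : Type*} [CommRing R] [IsDomain R]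
    [AddCommGroup M] [Module R M] (B : M →ₗ[R] M →ₗ[R] R) (T : M →ₗ[R] M)
    (hinv : ∀ v w : M, B (T v) (T w) = B v w) {ε ω : R} (hsym : ∀ v w : M, B v w = ε * B w v)
    {v : M} (hv : T (T v) = ω • v) (hBv : B (T v) v ≠ 0) : ε = ω := by
  have key : ω * B (T v) v = ε * B (T v) v :=
    calc ω * B (T v) v = B (T v) (T (T v)) := by rw [hv, map_smul, smul_eq_mul]
      _ = B v (T v) := hinv v (T v)
      _ = ε * B (T v) v := hsym v (T v)
  exact (mul_right_cancel₀ hBv key).symm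

theorem stmt13_general (G : Type*) [Group G] (W : Type*) [AddCommGroup W] [Module ℂ W]
    (π : Representation ℂ G W)
    (B : W →ₗ[ℂ] W →ₗ[ℂ] ℂ)
    (hinv : ∀ (g : G) (v w : W), B (π g v) (π g w) = B v w)
    (ε : ℂ)
    (hsym : ∀ v w : W, B v w = ε * B w v)
    (s : G)
    (ω : ℂ) (hω : ∀ v : W, π (s * s) v = ω • v)
    (v₀ : W) (hv₀ : B (π s v₀) v₀ ≠ 0) :
    ε = ω := by
  have hsq : π s (π s v₀) = ω • v₀ := by
    rw [← hω v₀, map_mul, Module.End.mul_apply]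
  exact B.sign_eq_of_sq_apply_eq_smul (π s) (hinv s) hsym hsq hv₀

/-- Prasad's criterion, untwisted case: for a self-dual irreducible representation
with invariant form of sign `ε`, an element `s` with `s²` central acting by the
scalar `ω` and pairing `B(π(s)v₀, v₀) ≠ 0` forces `ε = ω`. -/
theorem stmt13 (G : Type*) [Group G] (W : Type*) [AddCommGroup W] [Module ℂ W]
    [FiniteDimensional ℂ W]
    (π : Representation ℂ G W)
    (hirr : ∀ U : Submodule ℂ W, (∀ (g : G) (v : W), v ∈ U → π g v ∈ U) → U = ⊥ ∨ U = ⊤)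
    (hsd : ∃ e : W ≃ₗ[ℂ] Module.Dual ℂ W, ∀ (g : G) (v : W), e (π g v) = π.dual g (e v))
    (B : W →ₗ[ℂ] W →ₗ[ℂ] ℂ)
    (hnd : ∀ v : W, (∀ w : W, B v w = 0) → v = 0)
    (hinv : ∀ (g : G) (v w : W), B (π g v) (π g w) = B v w)
    (ε : ℂ) (hε : ε = 1 ∨ ε = -1)
    (hsym : ∀ v w : W, B v w = ε * B w v)
    (s : G) (hc : s * s ∈ Subgroup.center G)
    (ω : ℂ) (hω : ∀ v : W, π (s * s) v = ω • v)
    (v₀ : W) (hv₀ : B (π s v₀) v₀ ≠ 0) :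
    ε = ω :=
  stmt13_general G W π B hinv ε hsym s ω hω v₀ hv₀
end
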